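/- arXiv:1005.2394 — 8 statements merged into one kernel-verified Lean document; each statement's English description precedes it below -/
import Mathlib

section
/- Let G be a finite directed graph with vertex set S. Let Q_G ⊆ ℝ^S be the convex cone of all x = (x_s) such that x_{s₂(a)} ≤ x_{s₁(a)} for every edge a (going from s₁(a) to s₂(a)). Call a subset S′ ⊆ S admissible if every edge with source in S′ also has target in S′. Then the dual cone Q_G* (with respect to the standard inner product on ℝ^S) consists exactly of the vectors x = (x_s) satisfying: ∑_{s∈S} x_s = 0, and ∑_{s∈S′} x_s ≤ 0 for every admissible subset S′ ⊆ S. -/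
open Classical in
private lemma dual_cone_aux {S A : Type*} [Fintype S] [Fintype A]
    (src tgt : A → S) (v : S → ℝ)
    (hsum : ∑ s, v s = 0)
    (hadm : ∀ S' : Finset S, (∀ a, src a ∈ S' → tgt a ∈ S') → ∑ s ∈ S', v s ≤ 0) :
    ∀ n (x : S → ℝ), (Finset.image x Finset.univ).card ≤ n →
      (∀ a, x (tgt a) ≤ x (src a)) → 0 ≤ ∑ s, v s * x s := by
  intro n
  induction n with
  | zero =>
    intro x hc _
    have h0 : (Finset.image x Finset.univ).card = 0 := Nat.le_zero.mp hc
    have : (Finset.univ : Finset S) = ∅ := by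
      by_contra h
      obtain ⟨s, hs⟩ := Finset.nonempty_iff_ne_empty.mpr h
      have : x s ∈ Finset.image x Finset.univ := Finset.mem_image_of_mem x hs
      simp [Finset.card_eq_zero.mp h0] at this
    rw [this]; simp
  | succ n ih =>
    intro x hc hx
    rcases le_or_gt (Finset.image x Finset.univ).card n with h | h
    · exact ih x h hx
    have hne : (Finset.image x Finset.univ).Nonempty := Finset.card_pos.mp (by omega)
    set T := Finset.image x Finset.univ with hT
    set m := T.min' hne with hm
    have hgem : ∀ s, m ≤ x s := fun s =>
      T.min'_le _ (Finset.mem_image_of_mem x (Finset.mem_univ s))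
    by_cases hTe : (T.erase m).Nonempty
    · set m' := (T.erase m).min' hTe with hm'
      have hm'mem := Finset.min'_mem _ hTe
      have hm'mem' := Finset.mem_erase.mp hm'mem
      have hmm' : m < m' :=
        lt_of_le_of_ne (T.min'_le _ hm'mem'.2) (Ne.symm hm'mem'.1)
      have hge : ∀ s, x s ≠ m → m' ≤ x s := by
        intro s hs
        exact Finset.min'_le _ _ (Finset.mem_erase.mpr
          ⟨hs, Finset.mem_image_of_mem x (Finset.mem_univ s)⟩)
      set x' : S → ℝ := fun s => if x s = m then m' else x s with hx'def
      have hx' : ∀ a, x' (tgt a) ≤ x' (src a) := by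
        intro a
        by_cases h1 : x (src a) = m
        · have h2 : x (tgt a) = m := le_antisymm (h1 ▸ hx a) (hgem _)
          simp [hx'def, h1, h2]
        · by_cases h2 : x (tgt a) = m
          · simp only [hx'def, h1, h2, if_true, if_false]
            exact hge _ h1
          · simp only [hx'def, h1, h2, if_false]
            exact hx a
      have hsub : Finset.image x' Finset.univ ⊆ T.erase m := by
        intro y hy
        obtain ⟨s, _, hs⟩ := Finset.mem_image.mp hy
        by_cases h1 : x s = m
        · rw [← hs]; simp only [hx'def, h1, if_true]
          exact hm'mem
        · rw [← hs]; simp only [hx'def, h1, if_false]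
          exact Finset.mem_erase.mpr ⟨h1, Finset.mem_image_of_mem x (Finset.mem_univ s)⟩
      have hcard' : (Finset.image x' Finset.univ).card ≤ n := by
        have := Finset.card_le_card hsub
        have h2 : (T.erase m).card = T.card - 1 :=
          Finset.card_erase_of_mem (Finset.min'_mem _ _)
        omega
      have h0 := ih x' hcard' hx'
      have hF : ∀ a, src a ∈ Finset.univ.filter (fun s => x s = m) →
          tgt a ∈ Finset.univ.filter (fun s => x s = m) := by
        intro a ha
        have h1 : x (src a) = m := (Finset.mem_filter.mp ha).2
        have h2 : x (tgt a) = m := le_antisymm (h1 ▸ hx a) (hgem _)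
        exact Finset.mem_filter.mpr ⟨Finset.mem_univ _, h2⟩
      have hadm' := hadm _ hF
      have key : ∑ s, v s * x s - ∑ s, v s * x' s
          = (m - m') * ∑ s ∈ Finset.univ.filter (fun s => x s = m), v s := by
        rw [← Finset.sum_sub_distrib, Finset.mul_sum,
          ← Finset.sum_filter_add_sum_filter_not Finset.univ (fun s => x s = m)
            (fun s => v s * x s - v s * x' s)]
        have e1 : ∑ s ∈ Finset.univ.filter (fun s => ¬ x s = m),
            (v s * x s - v s * x' s) = 0 := by
          apply Finset.sum_eq_zero
          intro s hs
          have := (Finset.mem_filter.mp hs).2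
          simp [hx'def, this]
        rw [e1, add_zero]
        apply Finset.sum_congr rfl
        intro s hs
        have := (Finset.mem_filter.mp hs).2
        simp [hx'def, this]; ring
      have hprod : 0 ≤ (m - m') * ∑ s ∈ Finset.univ.filter (fun s => x s = m), v s :=
        by nlinarith [hadm', hmm']
      linarith
    · have hconst : ∀ s, x s = m := by
        intro s
        by_contra h1
        exact Finset.not_nonempty_empty (Finset.not_nonempty_iff_eq_empty.mp hTe ▸
          (⟨x s, Finset.mem_erase.mpr ⟨h1, Finset.mem_image_of_mem x (Finset.mem_univ s)⟩⟩ :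
            (T.erase m).Nonempty))
      have : ∑ s, v s * x s = m * ∑ s, v s := by
        rw [Finset.mul_sum]
        exact Finset.sum_congr rfl fun s _ => by rw [hconst s]; ring
      rw [this, hsum, mul_zero]

open Classical in
/-- For a finite directed graph with vertices `S` and edges `A` (with source `src`
and target `tgt`), the dual of the cone `Q_G = {x | ∀ a, x (tgt a) ≤ x (src a)}`
consists exactly of the vectors `v` with total sum `0` whose sum over every
admissible set of vertices is `≤ 0`. -/
theorem dual_cone_of_graph {S A : Type*} [Fintype S] [Fintype A]
    (src tgt : A → S) (v : S → ℝ) :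
    (∀ x : S → ℝ, (∀ a, x (tgt a) ≤ x (src a)) → 0 ≤ ∑ s, v s * x s) ↔
      ((∑ s, v s = 0) ∧ ∀ S' : Finset S, (∀ a, src a ∈ S' → tgt a ∈ S') →
        ∑ s ∈ S', v s ≤ 0) := by
  constructor
  · intro h
    constructor
    · have h1 := h (fun _ => 1) (fun a => le_refl _)
      have h2 := h (fun _ => -1) (fun a => le_refl _)
      simp only [mul_one, mul_neg_one, Finset.sum_neg_distrib] at h1 h2
      linarith
    · intro S' hS'
      have hcon : ∀ a, (fun s => if s ∈ S' then (-1:ℝ) else 0) (tgt a) ≤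
          (fun s => if s ∈ S' then (-1:ℝ) else 0) (src a) := by
        intro a
        by_cases h1 : src a ∈ S'
        · simp [h1, hS' a h1]
        · by_cases h2 : tgt a ∈ S' <;> simp [h1, h2]
      have := h (fun s => if s ∈ S' then (-1:ℝ) else 0) hcon
      have e : ∑ s, v s * (if s ∈ S' then (-1:ℝ) else 0) = -∑ s ∈ S', v s := by
        rw [← Finset.sum_neg_distrib, ← Finset.sum_filter_add_sum_filter_not
          Finset.univ (fun s => s ∈ S')]
        have e1 : ∑ s ∈ Finset.univ.filter (fun s => ¬ s ∈ S'),
            v s * (if s ∈ S' then (-1:ℝ) else 0) = 0 :=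
          Finset.sum_eq_zero fun s hs => by simp [(Finset.mem_filter.mp hs).2]
        rw [e1, add_zero]
        rw [show Finset.univ.filter (fun s => s ∈ S') = S' by
          ext s; simp]
        exact Finset.sum_congr rfl fun s hs => by simp [hs]
      rw [e] at this
      linarith
  · rintro ⟨hsum, hadm⟩ x hx
    exact dual_cone_aux src tgt v hsum hadm (Finset.image x Finset.univ).card x le_rfl hx
end

section
/- Let d ≥ 1 and b ∈ ℝ. Index coordinates of E = ℝ^I by I = {(i,j) : 1 ≤ i ≤ j ≤ d}. For 1 ≤ r ≤ d, let μ⃗_r ∈ E be the vector such that ⟨q, μ⃗_r⟩ = b·q_{r,r} − q_{r,d} + b·∑_{s=1}^{r−1}(q_{s,r} − q_{s,r−1}) for all q ∈ E. For a subset T ⊆ {1,…,d}, let S_T denote the sum of coordinates over the admissible subset J(T) = { (i,j) ∈ I : i ≤ #T and j > d − t_i }, where t₁ > ⋯ > t_{#T} are the elements of T. Then S_T(μ⃗_r) = b·𝟙_T(d+1−r) − 𝟙[#T ≥ r], where 𝟙_T is the indicator of T and 𝟙[#T ≥ r] is 1 if #T ≥ r and 0 otherwise. Moreover, if δ⃗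 ∈ E is the vector with ⟨q, δ⃗⟩ = b·∑_{(i,j)∈I} q_{i,j} + ∑_{i=1}^d (2i−1−d−bi)·q_{i,d}, then S_T(δ⃗) = b·( ∑_{t∈T} t − #T(#T+1)/2 ) − #T·(d − #T). -/
/-- The triangular index set `I = {(i,j) : 1 ≤ i ≤ j ≤ d}`. -/
def triIdx (d : ℕ) : Finset (ℕ × ℕ) :=
  (Finset.Icc 1 d ×ˢ Finset.Icc 1 d).filter fun p => p.1 ≤ p.2

/-- `tElem T i` is the `i`-th largest element of `T` (for `1 ≤ i ≤ #T`). -/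
def tElem (T : Finset ℕ) (i : ℕ) : ℕ :=
  (T.sort (· ≤ ·)).getD (T.card - i) 0

/-- `JofT d T = {(i,j) ∈ I : i ≤ #T and j > d − t_i}`, the admissible subset
of `I` associated to `T ⊆ {1,…,d}`. -/
def JofT (d : ℕ) (T : Finset ℕ) : Finset (ℕ × ℕ) :=
  (triIdx d).filter fun p => p.1 ≤ T.card ∧ d - tElem T p.1 < p.2


/-!
Row `s` of `J(T)` is the interval `[d + 1 - t_s, d]` for `s ≤ #T` and empty for `s > #T`.
So `#J(T) = ∑_{t ∈ T} t`, the column `d` meets `J(T)` exactly in the rows `1, …, #T`, and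
`q_{s,r} - q_{s,r-1}` is `1` precisely in the row with `t_s = d + 1 - r`, which exists iff
`d + 1 - r ∈ T`. Both identities then follow by summing, using `∑_{i ≤ k} i = k(k+1)/2`.
-/

open Finset

section tElem

variable {T : Finset ℕ} {i j : ℕ}

lemma tElem_mem (h1 : 1 ≤ i) (h2 : i ≤ #T) : tElem T i ∈ T := by
  have hlt : #T - i < (T.sort (· ≤ ·)).length := by rw [length_sort]; omega
  rw [tElem, List.getD_eq_getElem _ _ hlt]
  exact (mem_sort _).1 (List.getElem_mem hlt)

lemma tElem_lt_tElem (h1 : 1 ≤ i) (hij : i < j) (h2 : j ≤ #T) : tElem T j < tElem T i := by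
  have hlt1 : #T - j < (T.sort (· ≤ ·)).length := by rw [length_sort]; omega
  have hlt2 : #T - i < (T.sort (· ≤ ·)).length := by rw [length_sort]; omega
  rw [tElem, tElem, List.getD_eq_getElem _ _ hlt1, List.getD_eq_getElem _ _ hlt2]
  exact List.pairwise_iff_getElem.1 (sortedLT_sort T).pairwise _ _ hlt1 hlt2 (by omega)

lemma tElem_injOn : Set.InjOn (tElem T) (Icc 1 #T) := by
  intro i hi j hj hij
  simp only [coe_Icc, Set.mem_Icc] at hi hj
  by_contra hne
  rcases Nat.lt_or_gt_of_ne hne with h | h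
  · exact (tElem_lt_tElem hi.1 h hj.2).ne' hij
  · exact (tElem_lt_tElem hj.1 h hi.2).ne hij

lemma image_tElem : (Icc 1 #T).image (tElem T) = T := by
  refine Subset.antisymm (fun m hm => ?_) (fun m hm => ?_)
  · obtain ⟨i, hi, rfl⟩ := mem_image.1 hm
    exact tElem_mem (mem_Icc.1 hi).1 (mem_Icc.1 hi).2
  · obtain ⟨n, hn, hnm⟩ := List.getElem_of_mem ((mem_sort (· ≤ ·)).2 hm)
    have hnk : n < #T := length_sort (· ≤ ·) (s := T) ▸ hn
    refine mem_image.2 ⟨#T - n, mem_Icc.2 ⟨by omega, by omega⟩, ?_⟩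
    rw [tElem, Nat.sub_sub_self hnk.le, List.getD_eq_getElem _ _ hn, hnm]

lemma sum_Icc_card_tElem {M : Type*} [AddCommMonoid M] (f : ℕ → M) :
    ∑ i ∈ Icc 1 #T, f (tElem T i) = ∑ t ∈ T, f t := by
  conv_rhs => rw [← image_tElem (T := T)]
  exact (sum_image tElem_injOn).symm

lemma sum_Icc_card_ite_tElem_eq {R : Type*} [AddCommMonoidWithOne R] (m : ℕ) :
    ∑ i ∈ Icc 1 #T, (if tElem T i = m then (1 : R) else 0) = if m ∈ T then 1 else 0 := by
  rw [sum_Icc_card_tElem (fun t => if t = m then (1 : R) else 0), sum_ite_eq']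

variable {d : ℕ}

lemma card_le_of_subset_Icc (hT : T ⊆ Icc 1 d) : #T ≤ d := by
  simpa using card_le_card hT

lemma one_le_tElem (hT : T ⊆ Icc 1 d) (h1 : 1 ≤ i) (h2 : i ≤ #T) : 1 ≤ tElem T i :=
  (mem_Icc.1 (hT (tElem_mem h1 h2))).1

lemma tElem_add_le (hT : T ⊆ Icc 1 d) (h1 : 1 ≤ i) (h2 : i ≤ #T) : tElem T i + i ≤ d + 1 := by
  induction i, h1 using Nat.le_induction with
  | base => have := (mem_Icc.1 (hT (tElem_mem le_rfl h2))).2; omega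
  | succ n hn ih =>
    have := tElem_lt_tElem hn (Nat.lt_add_one n) h2
    have := ih (by omega)
    omega

end tElem

section JofT

variable {d : ℕ} {T : Finset ℕ} {s j r : ℕ}

/-- The condition `s ≤ j` of `I` is implied, since `t_s + s ≤ d + 1`. -/
lemma mem_JofT_iff (hT : T ⊆ Icc 1 d) :
    (s, j) ∈ JofT d T ↔ 1 ≤ s ∧ s ≤ #T ∧ d + 1 - tElem T s ≤ j ∧ j ≤ d := by
  simp only [JofT, triIdx, mem_filter, mem_product, mem_Icc]
  constructor
  · intro h
    omega
  · rintro ⟨hs, hsk, hj, hjd⟩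
    have := tElem_add_le hT hs hsk
    have := one_le_tElem hT hs hsk
    omega

lemma card_JofT (hT : T ⊆ Icc 1 d) : #(JofT d T) = ∑ t ∈ T, t := by
  have hrow : ∀ i ∈ Icc 1 #T, #((JofT d T).filter (·.1 = i)) = tElem T i := by
    intro i hi
    obtain ⟨h1, h2⟩ := mem_Icc.1 hi
    have hfib : (JofT d T).filter (·.1 = i) = {i} ×ˢ Icc (d + 1 - tElem T i) d := by
      ext ⟨s, j⟩
      simp only [mem_filter, mem_JofT_iff hT, mem_product, mem_singleton, mem_Icc]
      constructor
      · rintro ⟨⟨-, -, hj⟩, rfl⟩; exact ⟨rfl, hj⟩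
      · rintro ⟨rfl, hj⟩; exact ⟨⟨h1, h2, hj⟩, rfl⟩
    have := tElem_add_le hT h1 h2
    rw [hfib, card_product, card_singleton, Nat.card_Icc]
    omega
  rw [card_eq_sum_card_fiberwise (f := Prod.fst) (t := Icc 1 #T), sum_congr rfl hrow]
  · exact sum_Icc_card_tElem id
  · rintro ⟨s, j⟩ h
    obtain ⟨hs, hsk, -⟩ := (mem_JofT_iff hT).1 h
    exact mem_Icc.2 ⟨hs, hsk⟩

/-- The indicator vector of `J(T)` in `E = ℝ^I`. -/
noncomputable def indJ (d : ℕ) (T : Finset ℕ) (i j : ℕ) : ℝ :=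
  if (i, j) ∈ JofT d T then 1 else 0

lemma indJ_of_lt (h : j < s) : indJ d T s j = 0 := by
  rw [indJ, if_neg]
  simp only [JofT, triIdx, mem_filter]
  omega

lemma indJ_last (hT : T ⊆ Icc 1 d) (hs : 1 ≤ s) : indJ d T s d = if s ≤ #T then 1 else 0 := by
  refine if_congr ((mem_JofT_iff hT).trans ⟨fun h => h.2.1, fun h => ?_⟩) rfl rfl
  have := one_le_tElem hT hs h
  exact ⟨hs, h, by omega, le_rfl⟩

lemma indJ_sub_indJ_pred (hT : T ⊆ Icc 1 d) (hs : 1 ≤ s) (hjd : j ≤ d) :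
    indJ d T s j - indJ d T s (j - 1) = if s ≤ #T ∧ tElem T s = d + 1 - j then 1 else 0 := by
  simp only [indJ, mem_JofT_iff hT]
  by_cases hsk : s ≤ #T
  · have := tElem_add_le hT hs hsk
    have := one_le_tElem hT hs hsk
    split_ifs <;> first | (exfalso; omega) | norm_num
  · simp [hsk]

lemma indJ_add_sum_Ico_sub (hT : T ⊆ Icc 1 d) (hr : 1 ≤ r) (hrd : r ≤ d) :
    indJ d T r r + ∑ s ∈ Ico 1 r, (indJ d T s r - indJ d T s (r - 1)) =
      if d + 1 - r ∈ T then 1 else 0 := by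
  have hdiag : indJ d T r r = indJ d T r r - indJ d T r (r - 1) := by
    rw [indJ_of_lt (by omega : r - 1 < r), sub_zero]
  rw [hdiag, add_comm,
    ← sum_Ico_succ_top hr (fun s => indJ d T s r - indJ d T s (r - 1)),
    sum_congr rfl fun s hs => indJ_sub_indJ_pred hT (mem_Ico.1 hs).1 hrd, ← sum_filter]
  -- `t_s = d + 1 - r` already forces `s ≤ r`.
  have hfilter : (Ico 1 (r + 1)).filter (fun s => s ≤ #T ∧ tElem T s = d + 1 - r) =
      (Icc 1 #T).filter (fun s => tElem T s = d + 1 - r) := by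
    ext s
    simp only [mem_filter, mem_Ico, mem_Icc]
    constructor
    · rintro ⟨⟨hs, -⟩, hsk, ht⟩; exact ⟨⟨hs, hsk⟩, ht⟩
    · rintro ⟨⟨hs, hsk⟩, ht⟩
      have := tElem_add_le hT hs hsk
      exact ⟨⟨hs, by omega⟩, hsk, ht⟩
  rw [hfilter, sum_filter, sum_Icc_card_ite_tElem_eq]

lemma sum_triIdx_indJ (hT : T ⊆ Icc 1 d) :
    ∑ p ∈ triIdx d, indJ d T p.1 p.2 = ∑ t ∈ T, (t : ℝ) := by
  have hsub : JofT d T ⊆ triIdx d := filter_subset _ _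
  simp only [indJ]
  rw [sum_boole, filter_mem_eq_inter, inter_eq_right.2 hsub, card_JofT hT]
  push_cast
  rfl

lemma sum_Icc_mul_indJ_last (hT : T ⊆ Icc 1 d) (f : ℕ → ℝ) :
    ∑ i ∈ Icc 1 d, f i * indJ d T i d = ∑ i ∈ Icc 1 #T, f i := by
  rw [sum_congr rfl fun i hi => by rw [indJ_last hT (mem_Icc.1 hi).1, mul_ite, mul_one, mul_zero],
    ← sum_filter]
  congr 1
  ext i
  have := card_le_of_subset_Icc hT
  simp only [mem_filter, mem_Icc]
  omega

end JofT

lemma sum_Icc_one_cast {K : Type*} [Field K] [CharZero K] (k : ℕ) :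
    ∑ i ∈ Icc 1 k, (i : K) = k * (k + 1) / 2 := by
  induction k with
  | zero => simp
  | succ n ih =>
    rw [sum_Icc_succ_top (by omega), ih]
    push_cast
    ring

theorem ST_mu_and_ST_delta_general (d : ℕ) (b : ℝ) (r : ℕ)
    (hr1 : 1 ≤ r) (hrd : r ≤ d) (T : Finset ℕ) (hT : T ⊆ Finset.Icc 1 d)
    (q : ℕ → ℕ → ℝ)
    (hq : ∀ i j, q i j = if (i, j) ∈ JofT d T then 1 else 0) :
    (b * q r r - q r d + b * ∑ s ∈ Finset.Ico 1 r, (q s r - q s (r - 1)) =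
      b * (if d + 1 - r ∈ T then (1 : ℝ) else 0) -
        (if r ≤ T.card then (1 : ℝ) else 0)) ∧
    (b * (∑ p ∈ triIdx d, q p.1 p.2) +
        ∑ i ∈ Finset.Icc 1 d, (2 * (i : ℝ) - 1 - d - b * i) * q i d =
      b * ((∑ t ∈ T, (t : ℝ)) - T.card * (T.card + 1) / 2) -
        T.card * ((d : ℝ) - T.card)) := by
  obtain rfl : q = indJ d T := funext₂ hq
  constructor
  · rw [indJ_last hT hr1, ← indJ_add_sum_Ico_sub hT hr1 hrd]
    ring
  · rw [sum_triIdx_indJ hT, sum_Icc_mul_indJ_last hT, sum_sub_distrib, sum_sub_distrib,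
      sum_sub_distrib, ← mul_sum, ← mul_sum, sum_Icc_one_cast, sum_const, sum_const, Nat.card_Icc]
    simp only [nsmul_eq_mul, Nat.add_sub_cancel]
    ring

/-- Computation of `S_T(μ⃗_r)` and `S_T(δ⃗)`: evaluating the linear forms
`q ↦ ⟨q, μ⃗_r⟩` and `q ↦ ⟨q, δ⃗⟩` at the indicator vector `q` of the admissible
subset `J(T)` gives `b·𝟙_T(d+1−r) − 𝟙[#T ≥ r]` and
`b·(∑_{t∈T} t − #T(#T+1)/2) − #T·(d−#T)` respectively. -/
theorem ST_mu_and_ST_delta (d : ℕ) (hd : 1 ≤ d) (b : ℝ) (r : ℕ)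
    (hr1 : 1 ≤ r) (hrd : r ≤ d) (T : Finset ℕ) (hT : T ⊆ Finset.Icc 1 d)
    (q : ℕ → ℕ → ℝ)
    (hq : ∀ i j, q i j = if (i, j) ∈ JofT d T then 1 else 0) :
    (b * q r r - q r d + b * ∑ s ∈ Finset.Ico 1 r, (q s r - q s (r - 1)) =
      b * (if d + 1 - r ∈ T then (1 : ℝ) else 0) -
        (if r ≤ T.card then (1 : ℝ) else 0)) ∧
    (b * (∑ p ∈ triIdx d, q p.1 p.2) +
        ∑ i ∈ Finset.Icc 1 d, (2 * (i : ℝ) - 1 - d - b * i) * q i d =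
      b * ((∑ t ∈ T, (t : ℝ)) - T.card * (T.card + 1) / 2) -
        T.card * ((d : ℝ) - T.card)) :=
  ST_mu_and_ST_delta_general d b r hr1 hrd T hT q hq
end

section
/- Fix integers d ≥ 1 and a real b ≥ 2. For a subset T ⊆ {1,…,d} with s = #T, define f_T : ℝ^d → ℝ by f_T(y) = (y₁ + ⋯ + y_s) − b·∑_{t∈T} y_{d+1−t} − s(d−s) + b·( ∑_{t∈T} t − s(s+1)/2 ). Suppose y = (y₁,…,y_d) ∈ ℝ^d satisfies y₁ + ⋯ + y_d = 0 and f_T(y) ≥ 0 for every proper subset T ⊊ {1,…,d}. Then for all integers 0 ≤ m < n ≤ d, −m(n−m) ≤ y_{m+1} + y_{m+2} + ⋯ + y_n ≤ (n−m)(d−n). -/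
/-!
Each bound is a single facet inequality `f_T(y) ≥ 0`, for `T` chosen so that the reflected sum
`∑_{t∈T} y_{d+1-t}` is the sum to be bounded; the term `∑_{t∈T} t - s(s+1)/2` counts the pairs
`u < t` with `t ∈ T` and `u ∉ T`.

* `T = {d-k+1, …, d}` gives `(b-1)(k(d-k) - (y₁+⋯+yₖ)) ≥ 0`, the prefix bound
  `y₁+⋯+yₖ ≤ k(d-k)`;
* `T = {d-n+1, …, d-m}` gives the upper bound once the prefix bound disposes of `y₁+⋯+y_s`;
* `T = {1, …, d-n} ∪ {d-m+1, …, d}` reflects onto the complement of `{m+1, …, n}`, whose sum is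
  `-(y_{m+1}+⋯+y_n)`; with the prefix bound this gives the lower bound.
-/

/-- The affine functional `f_T(y) = (y₁+⋯+y_s) − b·∑_{t∈T} y_{d+1−t} − s(d−s)
+ b·(∑_{t∈T} t − s(s+1)/2)`, where `s = #T`. -/
noncomputable def fT (d : ℕ) (b : ℝ) (T : Finset ℕ) (y : ℕ → ℝ) : ℝ :=
  (∑ i ∈ Finset.Icc 1 T.card, y i) - b * ∑ t ∈ T, y (d + 1 - t)
    - T.card * ((d : ℝ) - T.card)
    + b * ((∑ t ∈ T, (t : ℝ)) - T.card * (T.card + 1) / 2)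

open Finset

lemma sum_Ioc_natCast (a s : ℕ) :
    ∑ t ∈ Ioc a (a + s), (t : ℝ) = s * a + s * (s + 1) / 2 := by
  induction s with
  | zero => simp
  | succ s ih =>
    rw [← add_assoc, sum_Ioc_succ_top (Nat.le_add_right a s), ih]
    push_cast
    ring

lemma sum_Ioc_reflect (y : ℕ → ℝ) {d a s r : ℕ} (h : a + s + r = d) :
    ∑ t ∈ Ioc a (a + s), y (d + 1 - t) = ∑ i ∈ Ioc r (r + s), y i := by
  refine sum_nbij' (fun t => d + 1 - t) (fun i => d + 1 - i) ?_ ?_ ?_ ?_ (fun _ _ => rfl) <;>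
    intro t ht <;> simp only [mem_Ioc] at * <;> omega

lemma Icc_one_eq_Ioc_zero (k : ℕ) : Icc 1 k = Ioc 0 k :=
  Icc_succ_left_eq_Ioc 0 k

section Polytope

variable {d : ℕ} {b : ℝ} {y : ℕ → ℝ}

lemma fT_Ioc {a s r : ℕ} (h : a + s + r = d) :
    fT d b (Ioc a (a + s)) y =
      ∑ i ∈ Ioc 0 s, y i - b * ∑ i ∈ Ioc r (r + s), y i - s * (a + r) + b * (s * a) := by
  have hcard : #(Ioc a (a + s)) = s := by rw [Nat.card_Ioc]; omega
  rw [fT, hcard, sum_Ioc_reflect y h, sum_Ioc_natCast, Icc_one_eq_Ioc_zero, ← h]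
  push_cast
  ring

lemma fT_Ioc_union_Ioc {p g q : ℕ} (h : p + g + q = d) :
    fT d b (Ioc 0 p ∪ Ioc (p + g) (p + g + q)) y =
      ∑ i ∈ Ioc 0 (p + q), y i - b * (∑ i ∈ Ioc (q + g) (q + g + p), y i + ∑ i ∈ Ioc 0 q, y i)
        - (p + q) * g + b * (q * g) := by
  have hdisj : Disjoint (Ioc 0 p) (Ioc (p + g) (p + g + q)) :=
    disjoint_left.2 fun t ht ht' => by simp only [mem_Ioc] at ht ht'; omega
  have hcard : #(Ioc 0 p ∪ Ioc (p + g) (p + g + q)) = p + q := by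
    rw [card_union_of_disjoint hdisj, Nat.card_Ioc, Nat.card_Ioc]; omega
  have hlow := sum_Ioc_reflect y (d := d) (a := 0) (s := p) (r := q + g) (by omega)
  have hhigh := sum_Ioc_reflect y (r := 0) h
  have hlowCast := sum_Ioc_natCast 0 p
  simp only [zero_add] at hlow hhigh hlowCast
  rw [fT, hcard, sum_union hdisj, sum_union hdisj, hlow, hhigh, hlowCast, sum_Ioc_natCast,
    Icc_one_eq_Ioc_zero, ← h]
  push_cast
  ring

lemma fT_nonneg_of_card_lt (hfT : ∀ T ⊆ Icc 1 d, T ≠ Icc 1 d → 0 ≤ fT d b T y)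
    {T : Finset ℕ} (hT : T ⊆ Icc 1 d) (hcard : #T < d) : 0 ≤ fT d b T y :=
  hfT T hT fun h => by simp [h] at hcard

lemma sum_Ioc_zero_le (hb : 1 < b) (hsum : ∑ i ∈ Ioc 0 d, y i = 0)
    (hfT : ∀ T ⊆ Icc 1 d, T ≠ Icc 1 d → 0 ≤ fT d b T y) {a k : ℕ} (h : a + k = d) :
    ∑ i ∈ Ioc 0 k, y i ≤ k * a := by
  rcases Nat.eq_zero_or_pos a with rfl | ha
  · rw [← h, zero_add] at hsum
    simp [hsum]
  have hfacet := fT_nonneg_of_card_lt hfT (T := Ioc a (a + k))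
    (fun t ht => by simp only [mem_Ioc, mem_Icc] at ht ⊢; omega) (by rw [Nat.card_Ioc]; omega)
  rw [fT_Ioc (r := 0) (by omega), zero_add, Nat.cast_zero, add_zero] at hfacet
  nlinarith

lemma sum_Ioc_le (hb : 1 < b) (hsum : ∑ i ∈ Ioc 0 d, y i = 0)
    (hfT : ∀ T ⊆ Icc 1 d, T ≠ Icc 1 d → 0 ≤ fT d b T y) {a s r : ℕ} (h : a + s + r = d) :
    ∑ i ∈ Ioc r (r + s), y i ≤ s * a := by
  by_cases hfull : a = 0 ∧ r = 0
  · obtain ⟨rfl, rfl⟩ := hfull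
    rw [← h, zero_add, add_zero] at hsum
    simp [hsum]
  have hfacet := fT_nonneg_of_card_lt hfT (T := Ioc a (a + s))
    (fun t ht => by simp only [mem_Ioc, mem_Icc] at ht ⊢; omega) (by rw [Nat.card_Ioc]; omega)
  rw [fT_Ioc h] at hfacet
  have hprefix := sum_Ioc_zero_le hb hsum hfT (a := a + r) (k := s) (by omega)
  push_cast at hprefix
  refine le_of_mul_le_mul_left ?_ (by linarith : (0 : ℝ) < b)
  linarith

lemma neg_le_sum_Ioc (hb : 1 < b) (hsum : ∑ i ∈ Ioc 0 d, y i = 0)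
    (hfT : ∀ T ⊆ Icc 1 d, T ≠ Icc 1 d → 0 ≤ fT d b T y) {p g q : ℕ} (hg : 0 < g)
    (h : p + g + q = d) :
    -(q * g : ℝ) ≤ ∑ i ∈ Ioc q (q + g), y i := by
  have hfacet := fT_nonneg_of_card_lt hfT (T := Ioc 0 p ∪ Ioc (p + g) (p + g + q))
    (fun t ht => by simp only [mem_union, mem_Ioc, mem_Icc] at ht ⊢; omega)
    ((card_union_le _ _).trans_lt (by simp only [Nat.card_Ioc]; omega))
  rw [fT_Ioc_union_Ioc h] at hfacet
  have hprefix := sum_Ioc_zero_le hb hsum hfT (a := g) (k := p + q) (by omega)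
  have hsplit : ∑ i ∈ Ioc 0 q, y i + ∑ i ∈ Ioc q (q + g), y i
      + ∑ i ∈ Ioc (q + g) (q + g + p), y i = 0 := by
    rw [sum_Ioc_consecutive _ (Nat.zero_le q) (Nat.le_add_right q g),
      sum_Ioc_consecutive _ (Nat.zero_le _) (Nat.le_add_right _ p), ← hsum, ← h]
    congr 2
    omega
  push_cast at hprefix
  refine le_of_mul_le_mul_left ?_ (by linarith : (0 : ℝ) < b)
  linear_combination hfacet + hprefix - b * hsplit

end Polytope

theorem sum_bounds_of_mem_polytope_general (d : ℕ) (b : ℝ) (hb : 2 ≤ b)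
    (y : ℕ → ℝ) (hsum : ∑ i ∈ Finset.Icc 1 d, y i = 0)
    (hfT : ∀ T ⊆ Finset.Icc 1 d, T ≠ Finset.Icc 1 d → 0 ≤ fT d b T y)
    (m n : ℕ) (hmn : m < n) (hnd : n ≤ d) :
    -((m : ℝ) * ((n : ℝ) - m)) ≤ ∑ i ∈ Finset.Icc (m + 1) n, y i ∧
      ∑ i ∈ Finset.Icc (m + 1) n, y i ≤ ((n : ℝ) - m) * ((d : ℝ) - n) := by
  have hb1 : 1 < b := by linarith
  rw [Icc_one_eq_Ioc_zero] at hsum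
  obtain ⟨g, rfl⟩ := Nat.exists_eq_add_of_lt hmn
  obtain ⟨a, rfl⟩ := Nat.exists_eq_add_of_le hnd
  rw [Icc_add_one_left_eq_Ioc, add_assoc m]
  have hupper := sum_Ioc_le hb1 hsum hfT (a := a) (s := g + 1) (r := m) (by omega)
  have hlower := neg_le_sum_Ioc hb1 hsum hfT (p := a) (g := g + 1) (q := m) g.succ_pos (by omega)
  push_cast at hupper hlower ⊢
  constructor <;> linarith

/-- Bounds for consecutive coordinate sums of a point of the polytope
`{y : ∑ y_i = 0, f_T(y) ≥ 0 for all T ⊊ {1,…,d}}`: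
`−m(n−m) ≤ y_{m+1} + ⋯ + y_n ≤ (n−m)(d−n)` for `0 ≤ m < n ≤ d`. -/
theorem sum_bounds_of_mem_polytope (d : ℕ) (hd : 1 ≤ d) (b : ℝ) (hb : 2 ≤ b)
    (y : ℕ → ℝ) (hsum : ∑ i ∈ Finset.Icc 1 d, y i = 0)
    (hfT : ∀ T ⊆ Finset.Icc 1 d, T ≠ Finset.Icc 1 d → 0 ≤ fT d b T y)
    (m n : ℕ) (hmn : m < n) (hnd : n ≤ d) :
    -((m : ℝ) * ((n : ℝ) - m)) ≤ ∑ i ∈ Finset.Icc (m + 1) n, y i ∧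
      ∑ i ∈ Finset.Icc (m + 1) n, y i ≤ ((n : ℝ) - m) * ((d : ℝ) - n) :=
  sum_bounds_of_mem_polytope_general d b hb y hsum hfT m n hmn hnd
end

section
/- Fix integers d ≥ 1 and a real number b > d. For T ⊆ {1,…,d} with s = #T define f_T(y) = (y₁ + ⋯ + y_s) − b·∑_{t∈T} y_{d+1−t} − s(d−s) + b·( ∑_{t∈T} t − s(s+1)/2 ). Let y ∈ ℝ^d satisfy ∑_i y_i = 0 and f_T(y) ≥ 0 for all T ⊊ {1,…,d}. Then for any two subsets T₁, T₂ ⊆ {1,…,d}: f_{T₁}(y) + f_{T₂}(y) ≥ f_{T₁∩T₂}(y) + f_{T₁∪T₂}(y), with equality if and only if T₁ ⊆ T₂ or T₂ ⊆ T₁. -/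
section Helpers
open Finset

lemma sum_reflect (d : ℕ) (f : ℕ → ℝ) :
    ∑ t ∈ Icc 1 d, f (d + 1 - t) = ∑ t ∈ Icc 1 d, f t := by
  apply Finset.sum_nbij' (i := fun t => d + 1 - t) (j := fun t => d + 1 - t) <;>
    intro a ha <;> simp [Finset.mem_Icc] at * <;> omega

lemma sum_Icc_cast (d : ℕ) : ∑ t ∈ Icc 1 d, (t : ℝ) = d * (d + 1) / 2 := by
  induction d with
  | zero => simp
  | succ n ih => rw [Finset.sum_Icc_succ_top (by omega)]; rw [ih]; push_cast; ring

lemma keyA (d : ℕ) (hd : 2 ≤ d) (b : ℝ) (y : ℕ → ℝ)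
    (hfT : ∀ T ⊆ Finset.Icc 1 d, T ≠ Finset.Icc 1 d → 0 ≤ fT d b T y)
    (j : ℕ) (hj1 : 1 ≤ j) (hjd : j ≤ d) :
    b * y j ≤ y 1 - ((d : ℝ) - 1) + b * ((d : ℝ) - j) := by
  set k := d + 1 - j with hk
  have hsub : ({k} : Finset ℕ) ⊆ Icc 1 d := by
    simp [Finset.singleton_subset_iff, Finset.mem_Icc]; omega
  have hne : ({k} : Finset ℕ) ≠ Icc 1 d := by
    intro h
    have := congrArg Finset.card h
    simp [Nat.card_Icc] at this; omega
  have h0 := hfT {k} hsub hne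
  have hdk : d + 1 - k = j := by omega
  have hkc : (k : ℝ) = (d : ℝ) + 1 - (j : ℝ) := by
    rw [hk, Nat.cast_sub (by omega)]; push_cast; ring
  simp only [fT, Finset.card_singleton, Finset.sum_singleton, Finset.Icc_self,
    hdk, hkc] at h0
  simp at h0
  linarith

lemma keyB (d : ℕ) (hd : 1 ≤ d) (b : ℝ) (y : ℕ → ℝ)
    (hsum : ∑ i ∈ Finset.Icc 1 d, y i = 0)
    (hfT : ∀ T ⊆ Finset.Icc 1 d, T ≠ Finset.Icc 1 d → 0 ≤ fT d b T y)
    (i : ℕ) (hi1 : 1 ≤ i) (hid : i ≤ d) :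
    y d + ((d : ℝ) - 1) - b * ((i : ℝ) - 1) ≤ b * y i := by
  set k := d + 1 - i with hk
  have hkmem : k ∈ Icc 1 d := by simp [Finset.mem_Icc]; omega
  have hsub : Icc 1 d \ {k} ⊆ Icc 1 d := Finset.sdiff_subset
  have hss : ({k} : Finset ℕ) ⊆ Icc 1 d := by simpa using hkmem
  have hcard : (Icc 1 d \ {k}).card = d - 1 := by
    rw [Finset.card_sdiff_of_subset hss]; simp [Nat.card_Icc]
  have hne : Icc 1 d \ {k} ≠ Icc 1 d := by
    intro h
    have := congrArg Finset.card h
    rw [hcard] at this; simp [Nat.card_Icc] at this; omega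
  have h0 := hfT _ hsub hne
  have hdk : d + 1 - k = i := by omega
  have hkc : (k : ℝ) = (d : ℝ) + 1 - (i : ℝ) := by
    rw [hk, Nat.cast_sub (by omega)]; push_cast; ring
  -- compute the pieces
  have hY : ∑ x ∈ Icc 1 (d - 1), y x = - y d := by
    have h1 : ∑ x ∈ Icc 1 ((d-1)+1), y x = ∑ x ∈ Icc 1 (d-1), y x + y ((d-1)+1) :=
      Finset.sum_Icc_succ_top (by omega) y
    rw [show (d-1)+1 = d by omega] at h1
    linarith [hsum, h1.symm]
  have hB : ∑ t ∈ Icc 1 d \ {k}, y (d + 1 - t) = - y i := by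
    rw [Finset.sum_sdiff_eq_sub hss, sum_reflect, hsum, Finset.sum_singleton, hdk]
    ring
  have hC : ∑ t ∈ Icc 1 d \ {k}, (t : ℝ) = (d : ℝ) * (d + 1) / 2 - k := by
    rw [Finset.sum_sdiff_eq_sub hss, sum_Icc_cast, Finset.sum_singleton]
  have hcc : ((Icc 1 d \ {k}).card : ℝ) = (d : ℝ) - 1 := by
    rw [hcard, Nat.cast_sub (by omega)]; simp
  simp only [fT, hcard, hY, hB, hC] at h0
  have hd1 : ((d - 1 : ℕ) : ℝ) = (d : ℝ) - 1 := by
    rw [Nat.cast_sub (by omega)]; simp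
  rw [hd1, hkc] at h0
  nlinarith [h0]

lemma keyMain (d : ℕ) (b : ℝ) (hb : (d : ℝ) < b) (y : ℕ → ℝ)
    (hsum : ∑ i ∈ Finset.Icc 1 d, y i = 0)
    (hfT : ∀ T ⊆ Finset.Icc 1 d, T ≠ Finset.Icc 1 d → 0 ≤ fT d b T y)
    (i j : ℕ) (hi1 : 1 ≤ i) (hij : i < j) (hjd : j ≤ d) :
    y j - y i < (b - 2) * ((j : ℝ) - i) := by
  have hd : 2 ≤ d := by omega
  have hbd : (2 : ℝ) < b := by
    have : (2 : ℝ) ≤ (d : ℝ) := by exact_mod_cast hd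
    linarith
  have hA := keyA d hd b y hfT j (by omega) hjd
  have hB := keyB d (by omega) b y hsum hfT i hi1 (by omega)
  have hA1 := keyA d hd b y hfT 1 le_rfl (by omega)
  have hBd := keyB d (by omega) b y hsum hfT d (by omega) le_rfl
  -- y 1 ≤ d - 1
  have hy1 : y 1 ≤ (d : ℝ) - 1 := by
    have : (b - 1) * y 1 ≤ (b - 1) * ((d : ℝ) - 1) := by push_cast at hA1 ⊢; nlinarith
    have hb1 : (0 : ℝ) < b - 1 := by linarith
    nlinarith
  have hyd : -((d : ℝ) - 1) ≤ y d := by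
    have : (b - 1) * (-((d:ℝ)-1)) ≤ (b - 1) * y d := by push_cast at hBd ⊢; nlinarith
    have hb1 : (0 : ℝ) < b - 1 := by linarith
    nlinarith
  have hji : (1 : ℝ) ≤ (j : ℝ) - i := by
    have : (i : ℝ) + 1 ≤ (j : ℝ) := by exact_mod_cast hij
    linarith
  -- b (y j - y i) ≤ b (d - 1 - (j - i))
  have hstep : y j - y i ≤ (d : ℝ) - 1 - ((j : ℝ) - i) := by
    have h1 : b * (y j - y i) ≤ b * ((d : ℝ) - 1 - ((j:ℝ) - i)) := by nlinarith
    have hbpos : (0 : ℝ) < b := by linarith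
    exact le_of_mul_le_mul_left h1 hbpos
  nlinarith

noncomputable def gq (d : ℕ) (b : ℝ) (y : ℕ → ℝ) (s : ℕ) : ℝ :=
  (∑ i ∈ Finset.Icc 1 s, y i) - (s : ℝ) * ((d : ℝ) - s) - b * ((s : ℝ) * ((s : ℝ) + 1) / 2)

lemma fT_eq (d : ℕ) (b : ℝ) (y : ℕ → ℝ) (T : Finset ℕ) :
    fT d b T y = gq d b y T.card + b * ∑ t ∈ T, ((t : ℝ) - y (d + 1 - t)) := by
  simp only [fT, gq, Finset.sum_sub_distrib]
  ring

lemma gq_succ (d : ℕ) (b : ℝ) (y : ℕ → ℝ) (k : ℕ) :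
    gq d b y (k + 1) - gq d b y k = y (k + 1) - ((d : ℝ) - 2 * k - 1) - b * ((k : ℝ) + 1) := by
  simp only [gq, Finset.sum_Icc_succ_top (show 1 ≤ k + 1 by omega)]
  push_cast
  ring

lemma deltag (d : ℕ) (b : ℝ) (hb : (d : ℝ) < b) (y : ℕ → ℝ)
    (hsum : ∑ i ∈ Finset.Icc 1 d, y i = 0)
    (hfT : ∀ T ⊆ Finset.Icc 1 d, T ≠ Finset.Icc 1 d → 0 ≤ fT d b T y)
    (k k' : ℕ) (hkk : k < k') (hk'd : k' + 1 ≤ d) :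
    gq d b y (k' + 1) - gq d b y k' < gq d b y (k + 1) - gq d b y k := by
  rw [gq_succ, gq_succ]
  have h := keyMain d b hb y hsum hfT (k + 1) (k' + 1) (by omega) (by omega) hk'd
  push_cast at h ⊢
  linarith

lemma agg (d : ℕ) (b : ℝ) (hb : (d : ℝ) < b) (y : ℕ → ℝ)
    (hsum : ∑ i ∈ Finset.Icc 1 d, y i = 0)
    (hfT : ∀ T ⊆ Finset.Icc 1 d, T ≠ Finset.Icc 1 d → 0 ≤ fT d b T y) :
    ∀ m a q, a + (m + 1) ≤ q → q + (m + 1) ≤ d →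
      gq d b y a + gq d b y (q + (m + 1)) < gq d b y (a + (m + 1)) + gq d b y q := by
  intro m
  induction m with
  | zero =>
    intro a q h1 h2
    have h := deltag d b hb y hsum hfT a q (by omega) (by omega)
    linarith
  | succ n ih =>
    intro a q h1 h2
    have IH := ih a q (by omega) (by omega)
    have hD := deltag d b hb y hsum hfT (a + (n + 1)) (q + (n + 1)) (by omega) (by omega)
    have e1 : q + (n + 1 + 1) = (q + (n + 1)) + 1 := by omega
    have e2 : a + (n + 1 + 1) = (a + (n + 1)) + 1 := by omega
    rw [e1, e2]
    linarith


end Helpers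

/-- Supermodularity: for `b > d` and `y` in the polytope
`{y : ∑ y_i = 0, f_T(y) ≥ 0 for all T ⊊ {1,…,d}}`, one has
`f_{T₁}(y) + f_{T₂}(y) ≥ f_{T₁∩T₂}(y) + f_{T₁∪T₂}(y)`, with equality iff
`T₁ ⊆ T₂` or `T₂ ⊆ T₁`. -/
theorem fT_supermodular (d : ℕ) (hd : 1 ≤ d) (b : ℝ) (hb : (d : ℝ) < b)
    (y : ℕ → ℝ) (hsum : ∑ i ∈ Finset.Icc 1 d, y i = 0)
    (hfT : ∀ T ⊆ Finset.Icc 1 d, T ≠ Finset.Icc 1 d → 0 ≤ fT d b T y)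
    (T₁ T₂ : Finset ℕ) (hT₁ : T₁ ⊆ Finset.Icc 1 d) (hT₂ : T₂ ⊆ Finset.Icc 1 d) :
    fT d b (T₁ ∩ T₂) y + fT d b (T₁ ∪ T₂) y ≤ fT d b T₁ y + fT d b T₂ y ∧
      (fT d b T₁ y + fT d b T₂ y = fT d b (T₁ ∩ T₂) y + fT d b (T₁ ∪ T₂) y ↔
        T₁ ⊆ T₂ ∨ T₂ ⊆ T₁) := by
  by_cases hnest : T₁ ⊆ T₂ ∨ T₂ ⊆ T₁
  · rcases hnest with h | h
    · rw [Finset.inter_eq_left.mpr h, Finset.union_eq_right.mpr h]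
      exact ⟨le_rfl, by simp [h]⟩
    · rw [Finset.inter_eq_right.mpr h, Finset.union_eq_left.mpr h]
      refine ⟨le_of_eq (by ring), ?_, fun _ => by ring⟩
      intro _; exact Or.inr h
  · push_neg at hnest
    obtain ⟨h12, h21⟩ := hnest
    have hci : (T₁ ∩ T₂).card + (T₁ ∪ T₂).card = T₁.card + T₂.card :=
      Finset.card_inter_add_card_union T₁ T₂
    have ha1 : (T₁ ∩ T₂).card < T₁.card := by
      apply Finset.card_lt_card
      rw [Finset.ssubset_iff_subset_ne]
      exact ⟨Finset.inter_subset_left, fun h => h12 (Finset.inter_eq_left.mp h)⟩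
    have ha2 : (T₁ ∩ T₂).card < T₂.card := by
      apply Finset.card_lt_card
      rw [Finset.ssubset_iff_subset_ne]
      exact ⟨Finset.inter_subset_right, fun h => h21 (Finset.inter_eq_right.mp h)⟩
    have hcu : (T₁ ∪ T₂).card ≤ d := by
      have := Finset.card_le_card (Finset.union_subset hT₁ hT₂)
      simpa [Nat.card_Icc] using this
    have key : ∀ p q : ℕ, (T₁ ∩ T₂).card < p → p ≤ q →
        p + q = (T₁ ∩ T₂).card + (T₁ ∪ T₂).card →
        gq d b y (T₁ ∩ T₂).card + gq d b y (T₁ ∪ T₂).card < gq d b y p + gq d b y q := by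
      intro p q hap hpq hpq2
      obtain ⟨m, hm⟩ : ∃ m, p - (T₁ ∩ T₂).card = m + 1 := ⟨p - (T₁ ∩ T₂).card - 1, by omega⟩
      have h := agg d b hb y hsum hfT m (T₁ ∩ T₂).card q (by omega) (by omega)
      rw [show (T₁ ∩ T₂).card + (m + 1) = p by omega,
        show q + (m + 1) = (T₁ ∪ T₂).card by omega] at h
      exact h
    have hgg : gq d b y (T₁ ∩ T₂).card + gq d b y (T₁ ∪ T₂).card <
        gq d b y T₁.card + gq d b y T₂.card := by
      rcases le_total T₁.card T₂.card with hle | hle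
      · exact key T₁.card T₂.card ha1 hle (by omega)
      · have := key T₂.card T₁.card ha2 hle (by omega)
        linarith
    have hmod : (∑ t ∈ T₁ ∪ T₂, ((t : ℝ) - y (d + 1 - t)))
        + ∑ t ∈ T₁ ∩ T₂, ((t : ℝ) - y (d + 1 - t))
        = (∑ t ∈ T₁, ((t : ℝ) - y (d + 1 - t))) + ∑ t ∈ T₂, ((t : ℝ) - y (d + 1 - t)) :=
      Finset.sum_union_inter
    have hmod2 : b * (∑ t ∈ T₁ ∩ T₂, ((t : ℝ) - y (d + 1 - t)))
        + b * (∑ t ∈ T₁ ∪ T₂, ((t : ℝ) - y (d + 1 - t)))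
        = b * (∑ t ∈ T₁, ((t : ℝ) - y (d + 1 - t)))
        + b * (∑ t ∈ T₂, ((t : ℝ) - y (d + 1 - t))) := by
      rw [← mul_add, ← mul_add, ← hmod]; ring
    have hlt : fT d b (T₁ ∩ T₂) y + fT d b (T₁ ∪ T₂) y < fT d b T₁ y + fT d b T₂ y := by
      rw [fT_eq, fT_eq, fT_eq, fT_eq]
      linarith
    refine ⟨le_of_lt hlt, ?_, ?_⟩
    · intro h; linarith
    · rintro (h | h)
      · exact absurd h h12
      · exact absurd h h21
end

section
/- Let d ≥ 1, let b be a real number with b > 1, and let w be a permutation of {1,…,d}. For each i ∈ {1,…,d} define z_i = ∑_{n=0}^{∞} (w^{n+1}(i) − w^n(i))/bⁿ (the series converges absolutely). Then (z₁,…,z_d) is the unique solution of the system z_i = w(i) − i + z_{w(i)}/b for all i ∈ {1,…,d}. -/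
/-!
Shifting the series by one term gives `z_i = w(i) − i + z_{w(i)}/b`. For uniqueness, the
difference `e` of two solutions satisfies `e_i = e_{w(i)}/b`; at an index where `|e|` is maximal
this gives `max |e| ≤ max |e| / b`, which forces `e = 0` because `b > 1`.
-/

open Set

lemma summable_div_pow_of_abs_le {a : ℕ → ℝ} {b C : ℝ} (hb : 1 < |b|) (ha : ∀ n, |a n| ≤ C) :
    Summable fun n => a n / b ^ n := by
  have hb0 : 0 < |b| := one_pos.trans hb
  refine Summable.of_norm_bounded ((summable_geometric_of_lt_one (by positivity)
    ((div_lt_one hb0).2 hb)).mul_left C) fun n => ?_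
  rw [Real.norm_eq_abs, abs_div, abs_pow, div_pow, one_pow, mul_one_div]
  gcongr
  exact ha n

lemma tsum_div_pow_eq_add_tsum_succ {a : ℕ → ℝ} {b : ℝ} (h : Summable fun n => a n / b ^ n) :
    ∑' n, a n / b ^ n = a 0 + (∑' n, a (n + 1) / b ^ n) / b := by
  rw [h.tsum_eq_zero_add, ← tsum_div_const]
  simp only [pow_zero, div_one, pow_succ, div_div]

lemma abs_natCast_sub_le_of_mem_Icc {m n d : ℕ} (hm : m ∈ Icc 1 d) (hn : n ∈ Icc 1 d) :
    |(m : ℝ) - n| ≤ d - 1 := by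
  have hm1 : (1 : ℝ) ≤ m := by exact_mod_cast hm.1
  have hmd : (m : ℝ) ≤ d := by exact_mod_cast hm.2
  have hn1 : (1 : ℝ) ≤ n := by exact_mod_cast hn.1
  have hnd : (n : ℝ) ≤ d := by exact_mod_cast hn.2
  exact abs_sub_le_iff.2 ⟨by linarith, by linarith⟩

lemma summable_iterate_sub_div_pow {d : ℕ} {w : ℕ → ℕ} (hw : MapsTo w (Icc 1 d) (Icc 1 d))
    {b : ℝ} (hb : 1 < |b|) {i : ℕ} (hi : i ∈ Icc 1 d) :
    Summable fun n => ((w^[n + 1] i : ℝ) - w^[n] i) / b ^ n :=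
  summable_div_pow_of_abs_le hb fun n =>
    abs_natCast_sub_le_of_mem_Icc (hw.iterate (n + 1) hi) (hw.iterate n hi)

lemma tsum_iterate_sub_div_pow_eq {w : ℕ → ℕ} {b : ℝ} {i : ℕ}
    (h : Summable fun n => ((w^[n + 1] i : ℝ) - w^[n] i) / b ^ n) :
    ∑' n, ((w^[n + 1] i : ℝ) - w^[n] i) / b ^ n =
      w i - i + (∑' n, ((w^[n + 1] (w i) : ℝ) - w^[n] (w i)) / b ^ n) / b := by
  rw [tsum_div_pow_eq_add_tsum_succ h]
  simp only [Function.iterate_succ_apply, Function.iterate_zero, id_eq]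

lemma eq_zero_of_forall_eq_comp_div {α : Type*} {s : Set α} (hs : s.Finite) {w : α → α}
    (hw : MapsTo w s s) {b : ℝ} (hb : 1 < |b|) {e : α → ℝ} (he : ∀ j ∈ s, e j = e (w j) / b) :
    ∀ i ∈ s, e i = 0 := by
  intro i hi
  obtain ⟨j, hj, hmax⟩ := Set.exists_max_image s (fun j => |e j|) hs ⟨i, hi⟩
  have hb0 : 0 < |b| := one_pos.trans hb
  have hej : |e j| ≤ |e j| / |b| := by
    calc |e j| = |e (w j)| / |b| := by rw [he j hj, abs_div]
      _ ≤ |e j| / |b| := div_le_div_of_nonneg_right (hmax _ (hw hj)) hb0.le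
  have hej0 : |e j| ≤ 0 := by
    rw [le_div_iff₀ hb0] at hej
    nlinarith [abs_nonneg (e j)]
  exact abs_nonpos_iff.1 ((hmax i hi).trans hej0)

theorem z_unique_solution_general (d : ℕ) (b : ℝ) (hb : 1 < b)
    (w : ℕ → ℕ) (hw : Set.BijOn w (Set.Icc 1 d) (Set.Icc 1 d))
    (z : ℕ → ℝ)
    (hz : ∀ i ∈ Set.Icc 1 d,
      z i = ∑' n : ℕ, ((w^[n + 1] i : ℝ) - (w^[n] i : ℝ)) / b ^ n) :
    (∀ i ∈ Set.Icc 1 d, z i = (w i : ℝ) - (i : ℝ) + z (w i) / b) ∧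
    (∀ z' : ℕ → ℝ,
      (∀ i ∈ Set.Icc 1 d, z' i = (w i : ℝ) - (i : ℝ) + z' (w i) / b) →
      ∀ i ∈ Set.Icc 1 d, z' i = z i) := by
  have hb' : 1 < |b| := hb.trans_le (le_abs_self b)
  have hz_sol : ∀ i ∈ Icc 1 d, z i = (w i : ℝ) - i + z (w i) / b := fun i hi => by
    rw [hz i hi, hz (w i) (hw.mapsTo hi)]
    exact tsum_iterate_sub_div_pow_eq (summable_iterate_sub_div_pow hw.mapsTo hb' hi)
  refine ⟨hz_sol, fun z' hz' i hi => sub_eq_zero.1 ?_⟩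
  refine eq_zero_of_forall_eq_comp_div (finite_Icc 1 d) hw.mapsTo hb' (e := z' - z)
    (fun j hj => ?_) i hi
  simp only [Pi.sub_apply, hz' j hj, hz_sol j hj]
  ring

/-- For a permutation `w` of `{1,…,d}` and `b > 1`, the vector
`z_i = ∑_{n=0}^∞ (w^{n+1}(i) − w^n(i))/bⁿ` is the unique solution of the system
`z_i = w(i) − i + z_{w(i)}/b` for `i ∈ {1,…,d}`. -/
theorem z_unique_solution (d : ℕ) (hd : 1 ≤ d) (b : ℝ) (hb : 1 < b)
    (w : ℕ → ℕ) (hw : Set.BijOn w (Set.Icc 1 d) (Set.Icc 1 d))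
    (z : ℕ → ℝ)
    (hz : ∀ i ∈ Set.Icc 1 d,
      z i = ∑' n : ℕ, ((w^[n + 1] i : ℝ) - (w^[n] i : ℝ)) / b ^ n) :
    (∀ i ∈ Set.Icc 1 d, z i = (w i : ℝ) - (i : ℝ) + z (w i) / b) ∧
    (∀ z' : ℕ → ℝ,
      (∀ i ∈ Set.Icc 1 d, z' i = (w i : ℝ) - (i : ℝ) + z' (w i) / b) →
      ∀ i ∈ Set.Icc 1 d, z' i = z i) :=
  z_unique_solution_general d b hb w hw z hz
end

section
/- Let d ≥ 2 and b > 1 real. Let H = { y ∈ ℝ^d : y₁ + ⋯ + y_d = 0 }, and for 1 ≤ i ≤ d−1 let v⃗_i ∈ ℝ^d be the vector with 1 in position i, −1 in position i+1, and 0 elsewhere; set w⃗_i = b·v⃗_{d−i} − v⃗_i. Then the cone { y ∈ H : (y₁ + ⋯ + y_s) − b·(y_{d+1−s} + ⋯ + y_d) ≥ 0 for all s ∈ {1,…,d−1} } is exactly the convex cone generated by w⃗₁, …, w⃗_{d−1}, i.e. the set of all nonnegative real linear combinations of the w⃗_i. -/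
/-!
Write `P_s(y) = y₁ + ⋯ + y_s`. On `H` the suffix sum `y_{d+1−s} + ⋯ + y_d` equals `−P_{d−s}(y)`,
so the defining forms become `F_s = P_s + b P_{d−s}`. Since `P_s(v⃗_i) = δ_{si}`, one gets
`P_s(w⃗_i) = b δ_{s,d−i} − δ_{si}` and hence `F_s(w⃗_i) = (b² − 1) δ_{si}`. A vector of `H` is
determined by its partial sums, and these are recovered from the `F_s` because the `2 × 2` system
pairing `s` with `d − s` has determinant `1 − b² ≠ 0`. So every `y` in the cone equals
`∑ λ_s w⃗_s` with `λ_s = F_s(y) / (b² − 1) ≥ 0`, and conversely `F_s(∑ λ_i w⃗_i) = (b² − 1) λ_s`.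
-/

open Finset

/-- The vector `v⃗_i ∈ ℝ^d` with `1` in position `i`, `−1` in position `i+1`
and `0` elsewhere (coordinates indexed by `{1,…,d} ⊆ ℕ`). -/
noncomputable def vvec (i : ℕ) : ℕ → ℝ :=
  fun j => if j = i then 1 else if j = i + 1 then -1 else 0

section PartialSum

variable {M : Type*}

def partialSum [AddCommMonoid M] (y : ℕ → M) (s : ℕ) : M := ∑ i ∈ Icc 1 s, y i

section AddCommMonoid

variable [AddCommMonoid M]

@[simp]
lemma partialSum_zero (y : ℕ → M) : partialSum y 0 = 0 := by
  simp [partialSum]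

lemma partialSum_succ (y : ℕ → M) (s : ℕ) : partialSum y (s + 1) = partialSum y s + y (s + 1) :=
  sum_Icc_succ_top (by omega) y

lemma partialSum_smul {R : Type*} [Monoid R] [DistribMulAction R M] (c : R) (y : ℕ → M)
    (s : ℕ) : partialSum (c • y) s = c • partialSum y s :=
  (smul_sum ..).symm

lemma partialSum_sum {ι : Type*} (T : Finset ι) (f : ι → ℕ → M) (s : ℕ) :
    partialSum (∑ i ∈ T, f i) s = ∑ i ∈ T, partialSum (f i) s := by
  simp only [partialSum, Finset.sum_apply]
  exact sum_comm

end AddCommMonoid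

variable [AddCommGroup M]

lemma partialSum_sub (y z : ℕ → M) (s : ℕ) :
    partialSum (y - z) s = partialSum y s - partialSum z s :=
  sum_sub_distrib y z

lemma sum_Icc_tail_eq_sub (y : ℕ → M) {d s : ℕ} (hs : s ≤ d) :
    ∑ i ∈ Icc (d + 1 - s) d, y i = partialSum y d - partialSum y (d - s) := by
  have hIoc : ∀ n, Icc 1 n = Ioc 0 n := fun n => Icc_add_one_left_eq_Ioc 0 n
  rw [show d + 1 - s = d - s + 1 by omega, Icc_add_one_left_eq_Ioc, partialSum, partialSum,
    hIoc, hIoc, ← sum_Ioc_consecutive y (Nat.zero_le _) (Nat.sub_le d s), add_sub_cancel_left]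

lemma apply_eq_of_partialSum_eq {y z : ℕ → M} {d : ℕ}
    (h : ∀ s ≤ d, partialSum y s = partialSum z s) {j : ℕ} (hj : j ∈ Set.Icc 1 d) :
    y j = z j := by
  obtain ⟨k, rfl⟩ : ∃ k, j = k + 1 := ⟨j - 1, by grind⟩
  have hk := h (k + 1) hj.2
  rwa [partialSum_succ, partialSum_succ, h k (by grind), add_left_cancel_iff] at hk

end PartialSum

lemma partialSum_vvec {i : ℕ} (hi : 1 ≤ i) (s : ℕ) :
    partialSum (vvec i) s = if i = s then 1 else 0 := by
  induction s with
  | zero => rw [partialSum_zero, if_neg (by omega)]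
  | succ s ih =>
    rw [partialSum_succ, ih, vvec]
    split_ifs <;> first | (exfalso; omega) | norm_num

lemma vvec_eq_zero_of_notMem {i d j : ℕ} (hi : i ∈ Icc 1 (d - 1)) (hj : j ∉ Set.Icc 1 d) :
    vvec i j = 0 := by
  simp only [mem_Icc] at hi
  simp only [Set.mem_Icc, not_and_or, not_le] at hj
  unfold vvec
  split_ifs <;> first | rfl | omega

noncomputable def regForm (d : ℕ) (b : ℝ) (y : ℕ → ℝ) (s : ℕ) : ℝ :=
  partialSum y s - b * ∑ i ∈ Icc (d + 1 - s) d, y i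

lemma regForm_eq {d : ℕ} (b : ℝ) {y : ℕ → ℝ} (hy : partialSum y d = 0) {s : ℕ} (hs : s ≤ d) :
    regForm d b y s = partialSum y s + b * partialSum y (d - s) := by
  rw [regForm, sum_Icc_tail_eq_sub y hs, hy]
  ring

lemma partialSum_eq_of_regForm_eq {d : ℕ} {b : ℝ} (hb : b ^ 2 ≠ 1) {y z : ℕ → ℝ}
    (hy : partialSum y d = 0) (hz : partialSum z d = 0)
    (h : ∀ s ∈ Icc 1 (d - 1), regForm d b y s = regForm d b z s) :
    ∀ s ≤ d, partialSum y s = partialSum z s := by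
  intro s hs
  rcases Nat.eq_zero_or_pos s with rfl | hs₀
  · simp
  rcases hs.eq_or_lt with rfl | hsd
  · rw [hy, hz]
  have h₁ := h s (by grind)
  have h₂ := h (d - s) (by grind)
  rw [regForm_eq b hy hs, regForm_eq b hz hs] at h₁
  rw [regForm_eq b hy (Nat.sub_le d s), regForm_eq b hz (Nat.sub_le d s),
    Nat.sub_sub_self hs] at h₂
  refine mul_left_cancel₀ (sub_ne_zero.mpr hb.symm) ?_
  linear_combination h₁ - b * h₂

noncomputable def coneComb (d : ℕ) (b : ℝ) (lam : ℕ → ℝ) : ℕ → ℝ :=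
  ∑ i ∈ Icc 1 (d - 1), lam i • (b • vvec (d - i) - vvec i)

section ConeComb

variable {d : ℕ} {b : ℝ} {lam : ℕ → ℝ}

lemma coneComb_eq_zero_of_notMem {j : ℕ} (hj : j ∉ Set.Icc 1 d) : coneComb d b lam j = 0 := by
  rw [coneComb, Finset.sum_apply]
  refine sum_eq_zero fun i hi => ?_
  have hdi : d - i ∈ Icc 1 (d - 1) := by grind
  simp [vvec_eq_zero_of_notMem hi hj, vvec_eq_zero_of_notMem hdi hj]

lemma partialSum_coneComb_of_mem {s : ℕ} (hs : s ∈ Icc 1 d) :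
    partialSum (coneComb d b lam) s =
      ∑ i ∈ Icc 1 (d - 1), ((if i = d - s then b * lam i else 0) - if i = s then lam i else 0) := by
  rw [coneComb, partialSum_sum]
  refine sum_congr rfl fun i hi => ?_
  rw [partialSum_smul, partialSum_sub, partialSum_smul, partialSum_vvec (by grind),
    partialSum_vvec (by grind), smul_eq_mul, smul_eq_mul]
  simp only [mem_Icc] at hs hi
  split_ifs <;> first | (exfalso; omega) | ring

lemma partialSum_coneComb_self : partialSum (coneComb d b lam) d = 0 := by
  rcases Nat.eq_zero_or_pos d with rfl | hd
  · simp
  rw [partialSum_coneComb_of_mem (by grind)]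
  refine sum_eq_zero fun i hi => ?_
  grind

lemma partialSum_coneComb {s : ℕ} (hs : s ∈ Icc 1 (d - 1)) :
    partialSum (coneComb d b lam) s = b * lam (d - s) - lam s := by
  rw [partialSum_coneComb_of_mem (by grind), sum_sub_distrib, sum_ite_eq', sum_ite_eq',
    if_pos (by grind), if_pos hs]

lemma regForm_coneComb {s : ℕ} (hs : s ∈ Icc 1 (d - 1)) :
    regForm d b (coneComb d b lam) s = (b ^ 2 - 1) * lam s := by
  have hds : d - s ∈ Icc 1 (d - 1) := by grind
  rw [regForm_eq b partialSum_coneComb_self (by grind), partialSum_coneComb hs,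
    partialSum_coneComb hds, Nat.sub_sub_self (by grind)]
  ring

end ConeComb

theorem reg_dual_cone_generators_general (d : ℕ) (b : ℝ) (hb : 1 < b) :
    {y : ℕ → ℝ | (∀ j, j ∉ Set.Icc 1 d → y j = 0) ∧
        (∑ i ∈ Finset.Icc 1 d, y i = 0) ∧
        ∀ s ∈ Finset.Icc 1 (d - 1),
          0 ≤ (∑ i ∈ Finset.Icc 1 s, y i) -
            b * ∑ i ∈ Finset.Icc (d + 1 - s) d, y i} =
      {y : ℕ → ℝ | ∃ lam : ℕ → ℝ, (∀ i, 0 ≤ lam i) ∧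
        y = ∑ i ∈ Finset.Icc 1 (d - 1), lam i • (b • vvec (d - i) - vvec i)} := by
  have hb₂ : 0 < b ^ 2 - 1 := by nlinarith
  ext y
  constructor
  · rintro ⟨hsupp, hsum, hreg⟩
    let lam : ℕ → ℝ := fun s => if s ∈ Icc 1 (d - 1) then regForm d b y s / (b ^ 2 - 1) else 0
    have hreg_eq : ∀ s ∈ Icc 1 (d - 1), regForm d b y s = regForm d b (coneComb d b lam) s := by
      intro s hs
      rw [regForm_coneComb hs, show lam s = _ from if_pos hs]
      field_simp
    refine ⟨lam, fun i => ?_, funext fun j => ?_⟩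
    · by_cases hi : i ∈ Icc 1 (d - 1)
      · exact (if_pos hi).trans_ge (div_nonneg (hreg i hi) hb₂.le)
      · exact (if_neg hi).ge
    by_cases hj : j ∈ Set.Icc 1 d
    · exact apply_eq_of_partialSum_eq
        (partialSum_eq_of_regForm_eq (sub_pos.mp hb₂).ne' hsum partialSum_coneComb_self hreg_eq) hj
    · exact (hsupp j hj).trans (coneComb_eq_zero_of_notMem (b := b) (lam := lam) hj).symm
  · rintro ⟨lam, hlam, rfl⟩
    refine ⟨fun j => coneComb_eq_zero_of_notMem, partialSum_coneComb_self, fun s hs => ?_⟩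
    show 0 ≤ regForm d b (coneComb d b lam) s
    rw [regForm_coneComb hs]
    exact mul_nonneg hb₂.le (hlam s)

/-- The cone `{y ∈ H : (y₁+⋯+y_s) − b(y_{d+1−s}+⋯+y_d) ≥ 0 ∀ s ∈ {1,…,d−1}}`
(inside the hyperplane `H` of vectors supported on `{1,…,d}` with zero
coordinate sum) is the convex cone generated by the vectors
`w⃗_i = b·v⃗_{d−i} − v⃗_i`, `1 ≤ i ≤ d−1`. -/
theorem reg_dual_cone_generators (d : ℕ) (hd : 2 ≤ d) (b : ℝ) (hb : 1 < b) :
    {y : ℕ → ℝ | (∀ j, j ∉ Set.Icc 1 d → y j = 0) ∧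
        (∑ i ∈ Finset.Icc 1 d, y i = 0) ∧
        ∀ s ∈ Finset.Icc 1 (d - 1),
          0 ≤ (∑ i ∈ Finset.Icc 1 s, y i) -
            b * ∑ i ∈ Finset.Icc (d + 1 - s) d, y i} =
      {y : ℕ → ℝ | ∃ lam : ℕ → ℝ, (∀ i, 0 ≤ lam i) ∧
        y = ∑ i ∈ Finset.Icc 1 (d - 1), lam i • (b • vvec (d - i) - vvec i)} :=
  reg_dual_cone_generators_general d b hb
end

section
/- Let d ≥ 2 and let w be a permutation of {1,…,d}. Define w′ : {1,…,d−1} → ℕ recursively: w′(i) is the smallest element of the set {w(1), …, w(i+1)} \ {w′(1), …, w′(i−1)}. Then: (a) for every i, the set {w(1),…,w(i+1)} \ {w′(1),…,w′(i−1)} has exactly two elements, namely w(i+1) and max{w(1),…,w(i)}; consequently w′(i) = w(i+1) if w(i+1) < max{w(1),…,w(i)}, and w′(i) = max{w(1),…,w(i)} otherwise; and (b) w′ is a permutation of {1,…,d−1}. -/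
/-!
By induction on `i`, the losers `w′(1), …, w′(i)` are exactly the values `w(1), …, w(i+1)` other
than their maximum. So at step `i` the candidates are the newcomer `w(i+1)`, which is new because
`w` is injective, and the running maximum of `w(1), …, w(i)`, the only earlier value that has not
yet lost; the smaller of the two loses and the larger is the new running maximum. For `i = d − 1`
the losers are `{1, …, d} \ {d}`.
-/

/-- `loserAux w i = [w′(1), …, w′(i)]`, the list of the first `i` values of the
permutation of losers of `w`: `w′(i)` is the smallest element of
`{w(1),…,w(i+1)} \ {w′(1),…,w′(i−1)}`. -/
noncomputable def loserAux (w : ℕ → ℕ) : ℕ → List ℕ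
  | 0 => []
  | i + 1 => loserAux w i ++
      [sInf {m : ℕ | (∃ k ∈ Finset.Icc 1 (i + 2), w k = m) ∧ m ∉ loserAux w i}]

/-- The permutation of losers of `w`: `loser w i = w′(i)` for `i ≥ 1`. -/
noncomputable def loser (w : ℕ → ℕ) (i : ℕ) : ℕ := (loserAux w i).getLastD 0

open Finset

lemma Finset.insert_sdiff_sdiff_singleton {α : Type*} [DecidableEq α] {s : Finset α} {a m : α}
    (ha : a ∉ s) (hm : m ∈ s) : insert a s \ (s \ {m}) = {a, m} := by
  ext x
  simp only [mem_sdiff, mem_insert, mem_singleton]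
  grind

lemma Finset.insert_min_sdiff_singleton {α : Type*} [LinearOrder α] {s : Finset α} {a m : α}
    (ha : a ∉ s) (hm : m ∈ s) : insert (min a m) (s \ {m}) = insert a s \ {max a m} := by
  ext x
  simp only [mem_sdiff, mem_insert, mem_singleton]
  rcases le_total a m with h | h
  · simp only [min_eq_left h, max_eq_right h]
    grind
  · simp only [min_eq_right h, max_eq_left h]
    grind

section Icc

variable {β : Type*} (f : ℕ → β)

lemma Finset.image_Icc_one_succ [DecidableEq β] (n : ℕ) :
    (Icc 1 (n + 1)).image f = insert (f (n + 1)) ((Icc 1 n).image f) := by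
  rw [← insert_Icc_right_eq_Icc_add_one (by omega), image_insert]

lemma Finset.sup_Icc_one_succ [SemilatticeSup β] [OrderBot β] (n : ℕ) :
    (Icc 1 (n + 1)).sup f = f (n + 1) ⊔ (Icc 1 n).sup f := by
  rw [← insert_Icc_right_eq_Icc_add_one (by omega), sup_insert]

lemma Finset.sup_Icc_one_mem_image [LinearOrder β] [OrderBot β] {n : ℕ} (hn : 1 ≤ n) :
    (Icc 1 n).sup f ∈ (Icc 1 n).image f := by
  rw [← mem_coe, coe_image]
  exact sup_mem_of_nonempty (nonempty_Icc.2 hn)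

end Icc

lemma Set.InjOn.apply_succ_notMem_image_Icc_one {β : Type*} [DecidableEq β] {f : ℕ → β} {n : ℕ}
    (hf : Set.InjOn f (Set.Icc 1 (n + 1))) : f (n + 1) ∉ (Finset.Icc 1 n).image f := by
  simp only [Finset.mem_image, Finset.mem_Icc, not_exists, not_and]
  intro k hk hfk
  have := hf ⟨hk.1, by omega⟩ ⟨by omega, le_rfl⟩ hfk
  omega

lemma loserAux_succ (w : ℕ → ℕ) (j : ℕ) :
    loserAux w (j + 1) = loserAux w j ++ [loser w (j + 1)] := by
  simp [loser, loserAux]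

lemma mem_loserAux_iff (w : ℕ → ℕ) (j m : ℕ) :
    m ∈ loserAux w j ↔ m ∈ (Icc 1 j).image (loser w) := by
  induction j with
  | zero => simp [loserAux]
  | succ j ih => simp [loserAux_succ, image_Icc_one_succ, ih, or_comm]

lemma loser_succ_eq_sInf (w : ℕ → ℕ) (j : ℕ) :
    loser w (j + 1) = sInf ↑((Icc 1 (j + 2)).image w \ (Icc 1 j).image (loser w)) := by
  rw [loser, loserAux, List.getLastD_concat]
  congr 1
  ext m
  simp [mem_loserAux_iff]

section Step

variable {w : ℕ → ℕ} {j : ℕ}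

lemma sdiff_image_loser_eq_pair (hw : Set.InjOn w (Set.Icc 1 (j + 2)))
    (hj : (Icc 1 j).image (loser w) = (Icc 1 (j + 1)).image w \ {(Icc 1 (j + 1)).sup w}) :
    (Icc 1 (j + 2)).image w \ (Icc 1 j).image (loser w) = {w (j + 2), (Icc 1 (j + 1)).sup w} := by
  rw [image_Icc_one_succ w (j + 1), hj]
  exact insert_sdiff_sdiff_singleton hw.apply_succ_notMem_image_Icc_one
    (sup_Icc_one_mem_image w (by omega))

lemma loser_succ_eq_min (hw : Set.InjOn w (Set.Icc 1 (j + 2)))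
    (hj : (Icc 1 j).image (loser w) = (Icc 1 (j + 1)).image w \ {(Icc 1 (j + 1)).sup w}) :
    loser w (j + 1) = min (w (j + 2)) ((Icc 1 (j + 1)).sup w) := by
  rw [loser_succ_eq_sInf, sdiff_image_loser_eq_pair hw hj, coe_pair, csInf_pair]

theorem image_loser_Icc_one (hw : Set.InjOn w (Set.Icc 1 (j + 1))) :
    (Icc 1 j).image (loser w) = (Icc 1 (j + 1)).image w \ {(Icc 1 (j + 1)).sup w} := by
  induction j with
  | zero => simp
  | succ j ih =>
    have hj := ih (hw.mono (Set.Icc_subset_Icc_right (by omega)))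
    rw [image_Icc_one_succ (loser w) j, hj, loser_succ_eq_min hw hj, image_Icc_one_succ w (j + 1),
      sup_Icc_one_succ w (j + 1)]
    exact insert_min_sdiff_singleton hw.apply_succ_notMem_image_Icc_one
      (sup_Icc_one_mem_image w (by omega))

end Step

theorem bijOn_loser {w : ℕ → ℕ} {n : ℕ}
    (hw : Set.BijOn w (Set.Icc 1 (n + 1)) (Set.Icc 1 (n + 1))) :
    Set.BijOn (loser w) (Set.Icc 1 n) (Set.Icc 1 n) := by
  have himage : (Icc 1 (n + 1)).image w = Icc 1 (n + 1) := by
    rw [← coe_inj, coe_image, coe_Icc, hw.image_eq]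
  have hsup : (Icc 1 (n + 1)).sup w = n + 1 := by
    refine le_antisymm (Finset.sup_le fun k hk => ?_) ?_
    · have hwk : w k ∈ Icc 1 (n + 1) := by rw [← himage]; exact mem_image_of_mem w hk
      exact (mem_Icc.1 hwk).2
    · have htop : n + 1 ∈ (Icc 1 (n + 1)).image w := by rw [himage]; simp
      obtain ⟨k, hk, hwk⟩ := mem_image.1 htop
      exact le_sup_of_le hk hwk.ge
  rw [← coe_Icc, ← image_eq_iff_bijOn_of_card le_rfl, image_loser_Icc_one hw.injOn, himage, hsup]
  ext k
  simp only [mem_sdiff, mem_Icc, mem_singleton]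
  omega

/-- For a permutation `w` of `{1,…,d}`: (a) for each `i ∈ {1,…,d−1}` the set
`{w(1),…,w(i+1)} \ {w′(1),…,w′(i−1)}` has exactly two elements, namely
`w(i+1)` and `max{w(1),…,w(i)}`, and `w′(i)` equals `w(i+1)` if
`w(i+1) < max{w(1),…,w(i)}` and `max{w(1),…,w(i)}` otherwise; and (b) `w′`
is a permutation of `{1,…,d−1}`. -/
theorem loser_spec (d : ℕ) (hd : 2 ≤ d) (w : ℕ → ℕ)
    (hw : Set.BijOn w (Set.Icc 1 d) (Set.Icc 1 d)) :
    (∀ i ∈ Finset.Icc 1 (d - 1),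
      ((Finset.Icc 1 (i + 1)).image w \ (Finset.Icc 1 (i - 1)).image (loser w)
          = {w (i + 1), (Finset.Icc 1 i).sup w} ∧
        w (i + 1) ≠ (Finset.Icc 1 i).sup w) ∧
      loser w i = if w (i + 1) < (Finset.Icc 1 i).sup w then w (i + 1)
        else (Finset.Icc 1 i).sup w) ∧
    Set.BijOn (loser w) (Set.Icc 1 (d - 1)) (Set.Icc 1 (d - 1)) := by
  obtain ⟨n, rfl⟩ : ∃ n, d = n + 1 := ⟨d - 1, by omega⟩
  refine ⟨fun i hi => ?_, bijOn_loser hw⟩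
  obtain ⟨j, rfl⟩ : ∃ j, i = j + 1 := ⟨i - 1, by grind⟩
  have hwj : Set.InjOn w (Set.Icc 1 (j + 2)) :=
    hw.injOn.mono (Set.Icc_subset_Icc_right (by grind))
  have hj := image_loser_Icc_one (j := j) (hwj.mono (Set.Icc_subset_Icc_right (by omega)))
  have hne : w (j + 2) ≠ (Icc 1 (j + 1)).sup w := fun h =>
    hwj.apply_succ_notMem_image_Icc_one (h ▸ sup_Icc_one_mem_image w (by omega))
  refine ⟨⟨sdiff_image_loser_eq_pair hwj hj, hne⟩, ?_⟩
  change loser w (j + 1) = if w (j + 2) < _ then w (j + 2) else _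
  rw [loser_succ_eq_min hwj hj]
  split_ifs <;> omega
end

section
/- Fix an integer b ≥ 2. For an integer e ≥ 0, define D(e) ∈ ℤ as the maximum of μ₁ − x over all triples of integers (μ₁, μ₂, x) satisfying: 0 ≤ μ₂ ≤ μ₁ ≤ e, (b−1) ∣ (μ₁ + μ₂), (b−1) ∣ x, μ₂ ≤ x ≤ μ₁, and (b+1)·x ≥ b·μ₁ + μ₂. (The feasible set is nonempty since (0,0,0) is feasible, and it is finite.) Then for every integer e ≥ 0, D(e + (b²−1)) = D(e) + (b−1). -/
/-- `kisinDim2 b e` is the maximum of `μ₁ − x` over all integer triples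
`(μ₁, μ₂, x)` with `0 ≤ μ₂ ≤ μ₁ ≤ e`, `(b−1) ∣ (μ₁+μ₂)`, `(b−1) ∣ x`,
`μ₂ ≤ x ≤ μ₁` and `(b+1)x ≥ bμ₁ + μ₂`. -/
noncomputable def kisinDim2 (b e : ℤ) : ℤ :=
  sSup {v : ℤ | ∃ μ₁ μ₂ x : ℤ, 0 ≤ μ₂ ∧ μ₂ ≤ μ₁ ∧ μ₁ ≤ e ∧
    (b - 1) ∣ (μ₁ + μ₂) ∧ (b - 1) ∣ x ∧ μ₂ ≤ x ∧ x ≤ μ₁ ∧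
    b * μ₁ + μ₂ ≤ (b + 1) * x ∧ v = μ₁ - x}

def kSet (b e : ℤ) : Set ℤ :=
  {v : ℤ | ∃ μ₁ μ₂ x : ℤ, 0 ≤ μ₂ ∧ μ₂ ≤ μ₁ ∧ μ₁ ≤ e ∧
    (b - 1) ∣ (μ₁ + μ₂) ∧ (b - 1) ∣ x ∧ μ₂ ≤ x ∧ x ≤ μ₁ ∧
    b * μ₁ + μ₂ ≤ (b + 1) * x ∧ v = μ₁ - x}

lemma kisinDim2_eq (b e : ℤ) : kisinDim2 b e = sSup (kSet b e) := rfl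

lemma kSet_zero_mem (b e : ℤ) (he : 0 ≤ e) : (0 : ℤ) ∈ kSet b e :=
  ⟨0, 0, 0, le_refl 0, le_refl 0, he, by simp, by simp, le_refl 0, le_refl 0,
    by simp, by simp⟩

lemma kSet_bddAbove (b e : ℤ) : BddAbove (kSet b e) := by
  refine ⟨e, fun v hv => ?_⟩
  obtain ⟨μ₁, μ₂, x, h1, h2, h3, _, _, h6, h7, _, h9⟩ := hv
  linarith

lemma kSet_nonempty (b e : ℤ) (he : 0 ≤ e) : (kSet b e).Nonempty :=
  ⟨0, kSet_zero_mem b e he⟩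

/-- Periodicity of the dimension of the Kisin variety `X_{≤e}` for `d = 2`:
`D(e + (b²−1)) = D(e) + (b−1)` for all `e ≥ 0`. -/
theorem kisinDim2_periodic (b : ℤ) (hb : 2 ≤ b) (e : ℤ) (he : 0 ≤ e) :
    kisinDim2 b (e + (b ^ 2 - 1)) = kisinDim2 b e + (b - 1) := by
  have hB : (0:ℤ) ≤ b ^ 2 - 1 := by nlinarith
  have he' : (0:ℤ) ≤ e + (b ^ 2 - 1) := by linarith
  rw [kisinDim2_eq, kisinDim2_eq]
  have hD0 : 0 ≤ sSup (kSet b e) :=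
    le_csSup (kSet_bddAbove b e) (kSet_zero_mem b e he)
  apply le_antisymm
  · -- upper bound
    apply csSup_le (kSet_nonempty b (e + (b^2-1)) he')
    rintro v ⟨μ₁, μ₂, x, h1, h2, h3, h4, h5, h6, h7, h8, h9⟩
    by_cases hc1 : μ₁ ≤ e
    · have : v ∈ kSet b e := ⟨μ₁, μ₂, x, h1, h2, hc1, h4, h5, h6, h7, h8, h9⟩
      have := le_csSup (kSet_bddAbove b e) this
      linarith
    · by_cases hc2 : μ₁ - (b - 1) < x
      · -- v = μ₁ - x ≤ b - 2
        have : v ≤ b - 2 := by omega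
        linarith
      · by_cases hc3 : x - b * (b - 1) < μ₂
        · -- b * v ≤ x - μ₂ < b*(b-1), so v < b - 1
          have hbv : b * v < b * (b - 1) := by nlinarith
          have : v < b - 1 := lt_of_mul_lt_mul_left hbv (by linarith)
          linarith
        · push_neg at hc2 hc3
          have hmem : v - (b - 1) ∈ kSet b e := by
            refine ⟨μ₁ - (b^2 - 1), μ₂, x - b * (b - 1), h1, by linarith, by linarith,
              ?_, ?_, by linarith, by linarith, by nlinarith, by linarith⟩
            · have : μ₁ - (b^2-1) + μ₂ = (μ₁ + μ₂) - (b-1) * (b+1) := by ring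
              rw [this]
              exact dvd_sub h4 ⟨b + 1, rfl⟩
            · have : x - b * (b-1) = x - (b-1) * b := by ring
              rw [this]
              exact dvd_sub h5 ⟨b, rfl⟩
          have := le_csSup (kSet_bddAbove b e) hmem
          linarith
  · -- lower bound
    have : ∀ v ∈ kSet b e, v + (b - 1) ≤ sSup (kSet b (e + (b^2-1))) := by
      rintro v ⟨μ₁, μ₂, x, h1, h2, h3, h4, h5, h6, h7, h8, h9⟩
      have hmem : v + (b - 1) ∈ kSet b (e + (b^2-1)) := by
        refine ⟨μ₁ + (b^2 - 1), μ₂, x + b * (b - 1), h1, by nlinarith, by linarith,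
          ?_, ?_, by nlinarith, by nlinarith, by nlinarith, by linarith⟩
        · have : μ₁ + (b^2-1) + μ₂ = (μ₁ + μ₂) + (b-1) * (b+1) := by ring
          rw [this]
          exact dvd_add h4 ⟨b + 1, rfl⟩
        · have : x + b * (b-1) = x + (b-1) * b := by ring
          rw [this]
          exact dvd_add h5 ⟨b, rfl⟩
      exact le_csSup (kSet_bddAbove b (e + (b^2-1))) hmem
    have h2 : sSup (kSet b e) + (b - 1) ≤ sSup (kSet b (e + (b^2-1))) := by
      have := csSup_le (kSet_nonempty b e he) (fun v hv => by
        have := this v hv; linarith : ∀ v ∈ kSet b e,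
          v ≤ sSup (kSet b (e + (b^2-1))) - (b - 1))
      linarith
    linarith
end
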